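/- Let S = diag(s₁,s₂,s₃) with s₁ ≥ s₂ ≥ |s₃| ≥ 0, and let dᵢ(S) be the diagonal entries of the first moment of the matrix Fisher distribution M(S). Then for any pair of distinct indices i, j ∈ {1,2,3}: dᵢ(S) + dⱼ(S) ≥ 0, and sᵢ + sⱼ = 0 if and only if dᵢ(S) + dⱼ(S) = 0. -/

import Mathlib

open MeasureTheory Matrix

noncomputable section

/-- The space of real `3 × 3` matrices. -/
abbrev M3 := Matrix (Fin 3) (Fin 3) ℝ

instance : MeasurableSpace M3 := (inferInstance : MeasurableSpace (Fin 3 → Fin 3 → ℝ))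

/-- The special orthogonal group `SO(3)`: real `3 × 3` matrices `R` with
`Rᵀ R = 1` and `det R = 1`. -/
def SO3 : Set M3 := {R | Rᵀ * R = 1 ∧ R.det = 1}

/-- `μ` is the Haar probability measure of the compact group `SO(3)`, viewed as a measure
on the ambient space of `3 × 3` matrices: it is a probability measure carried by `SO3`
which is invariant under left and right translation by elements of `SO3`. -/
structure IsHaarSO3 (μ : Measure M3) : Prop where
  prob : IsProbabilityMeasure μ
  carried : μ SO3ᶜ = 0
  map_left : ∀ U ∈ SO3, Measure.map (fun R => U * R) μ = μ
  map_right : ∀ V ∈ SO3, Measure.map (fun R => R * V) μ = μ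

/-- The normalizing constant `c(S)` of the matrix Fisher distribution with diagonal
parameter `S = diag s`. -/
def cS (μ : Measure M3) (s : Fin 3 → ℝ) : ℝ :=
  ∫ Q, Real.exp ((Matrix.diagonal s * Q).trace) ∂μ

/-- The matrix Fisher density `p_S(Q) = exp(tr(S Q)) / c(S)` with diagonal parameter
`S = diag s`. -/
def pS (μ : Measure M3) (s : Fin 3 → ℝ) (Q : M3) : ℝ :=
  Real.exp ((Matrix.diagonal s * Q).trace) / cS μ s

/-- `dᵢ(S)`: the `i`-th diagonal entry of the first moment `E[Q]` of the matrix Fisher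
distribution `M(S)` with `S = diag s`. -/
def dS (μ : Measure M3) (s : Fin 3 → ℝ) (i : Fin 3) : ℝ :=
  ∫ Q, Q i i * pS μ s Q ∂μ

/-!
Let `k` be the third index. The half-turn `U` about the `k`-th axis negates `Qᵢᵢ` and `Qⱼⱼ`, and
the half-turn `P` about `eᵢ - eⱼ` exchanges them; both preserve `μ`. Averaging
`(Qᵢᵢ + Qⱼⱼ) exp tr(SQ)` over `Q ↦ Q, UQ, PQPᵀ, UPQPᵀ` gives
`2 exp(sₖQₖₖ) · a (sinh x + sinh y)` with `a = Qᵢᵢ + Qⱼⱼ` and `x + y = (sᵢ + sⱼ) a`. Since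
`sᵢ + sⱼ ≥ 0`, this is nonnegative; it vanishes identically when `sᵢ + sⱼ = 0` and is positive at
`Q = 1` otherwise, and a Haar measure charges every neighbourhood of `1`.
-/

open Real

instance : BorelSpace M3 := Pi.borelSpace

namespace SO3

theorem transpose_mem {A : M3} (hA : A ∈ SO3) : Aᵀ ∈ SO3 :=
  ⟨by rw [transpose_transpose]; exact mul_eq_one_comm.mp hA.1, by rw [det_transpose]; exact hA.2⟩

theorem abs_apply_le_one {A : M3} (hA : A ∈ SO3) (a b : Fin 3) : |A a b| ≤ 1 := by
  have hcol : ∑ c, A c b * A c b = 1 := by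
    simpa [Matrix.mul_apply] using congrFun (congrFun hA.1 b) b
  rw [abs_le_one_iff_mul_self_le_one, ← hcol]
  exact Finset.single_le_sum (fun c _ => mul_self_nonneg (A c b)) (Finset.mem_univ a)

theorem isCompact : IsCompact SO3 := by
  have hclosed : IsClosed SO3 :=
    (isClosed_eq (by fun_prop) continuous_const).inter (isClosed_eq (by fun_prop) continuous_const)
  refine (isCompact_univ_pi fun _ => isCompact_univ_pi fun _ =>
    isCompact_Icc (a := -1) (b := 1)).of_isClosed_subset hclosed fun A hA => ?_
  simpa only [Set.mem_univ_pi, Set.mem_Icc] using fun a b => abs_le.mp (abs_apply_le_one hA a b)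

end SO3

namespace IsHaarSO3

variable {μ : Measure M3}

theorem ae_mem (hμ : IsHaarSO3 μ) : ∀ᵐ Q ∂μ, Q ∈ SO3 :=
  mem_ae_iff.2 hμ.carried

theorem integrable_of_continuous (hμ : IsHaarSO3 μ) {f : M3 → ℝ} (hf : Continuous f) :
    Integrable f μ := by
  have := hμ.prob
  obtain ⟨C, hC⟩ := SO3.isCompact.exists_bound_of_continuousOn hf.continuousOn
  refine (integrable_const C).mono' hf.aestronglyMeasurable ?_
  filter_upwards [hμ.ae_mem] with Q hQ using hC Q hQ

theorem integral_comp_mul_left (hμ : IsHaarSO3 μ) {U : M3} (hU : U ∈ SO3) {f : M3 → ℝ}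
    (hf : Continuous f) : ∫ Q, f (U * Q) ∂μ = ∫ Q, f Q ∂μ := by
  conv_rhs => rw [← hμ.map_left U hU]
  exact (integral_map (by fun_prop) hf.aestronglyMeasurable).symm

theorem integral_comp_mul_right (hμ : IsHaarSO3 μ) {V : M3} (hV : V ∈ SO3) {f : M3 → ℝ}
    (hf : Continuous f) : ∫ Q, f (Q * V) ∂μ = ∫ Q, f Q ∂μ := by
  conv_rhs => rw [← hμ.map_right V hV]
  exact (integral_map (by fun_prop) hf.aestronglyMeasurable).symm

theorem integral_comp_conj (hμ : IsHaarSO3 μ) {P : M3} (hP : P ∈ SO3) {f : M3 → ℝ}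
    (hf : Continuous f) : ∫ Q, f (P * Q * Pᵀ) ∂μ = ∫ Q, f Q ∂μ := by
  rw [hμ.integral_comp_mul_left hP (f := fun Q => f (Q * Pᵀ)) (by fun_prop),
    hμ.integral_comp_mul_right (SO3.transpose_mem hP) hf]

theorem integral_add_comp_mul_left (hμ : IsHaarSO3 μ) {U : M3} (hU : U ∈ SO3) {f : M3 → ℝ}
    (hf : Continuous f) : ∫ Q, (f Q + f (U * Q)) ∂μ = 2 * ∫ Q, f Q ∂μ := by
  rw [integral_add (hμ.integrable_of_continuous hf) (hμ.integrable_of_continuous (by fun_prop)),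
    hμ.integral_comp_mul_left hU hf, two_mul]

theorem integral_add_comp_conj (hμ : IsHaarSO3 μ) {P : M3} (hP : P ∈ SO3) {f : M3 → ℝ}
    (hf : Continuous f) : ∫ Q, (f Q + f (P * Q * Pᵀ)) ∂μ = 2 * ∫ Q, f Q ∂μ := by
  rw [integral_add (hμ.integrable_of_continuous hf) (hμ.integrable_of_continuous (by fun_prop)),
    hμ.integral_comp_conj hP hf, two_mul]

/-- Finitely many left translates of `V`, all of measure `μ V`, cover the compact set `SO3`. -/
theorem measure_pos_of_isOpen (hμ : IsHaarSO3 μ) {V : Set M3} (hV : IsOpen V)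
    (h1 : (1 : M3) ∈ V) : 0 < μ V := by
  have htranslate : ∀ R ∈ SO3, μ ((Rᵀ * ·) ⁻¹' V) = μ V := fun R hR => by
    rw [← Measure.map_apply (by fun_prop) hV.measurableSet, hμ.map_left _ (SO3.transpose_mem hR)]
  obtain ⟨t, hcover⟩ := SO3.isCompact.elim_finite_subcover (fun R : SO3 => ((R : M3)ᵀ * ·) ⁻¹' V)
    (fun R => hV.preimage (by fun_prop))
    (fun R hR => Set.mem_iUnion.2 ⟨⟨R, hR⟩, by simpa [hR.1] using h1⟩)
  have hbound : 1 ≤ t.card * μ V := calc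
    1 = μ SO3 := by
      have := hμ.prob
      exact ((prob_compl_eq_zero_iff SO3.isCompact.isClosed.measurableSet).1 hμ.carried).symm
    _ ≤ ∑ R ∈ t, μ (((R : M3)ᵀ * ·) ⁻¹' V) :=
      (measure_mono hcover).trans (measure_biUnion_finset_le _ _)
    _ = t.card * μ V := by simp [htranslate _ (Subtype.prop _)]
  exact pos_iff_ne_zero.2 fun h => by simp [h] at hbound

theorem integral_pos_of_continuous (hμ : IsHaarSO3 μ) {f : M3 → ℝ} (hf : Continuous f)
    (hnonneg : 0 ≤ f) (hone : 0 < f 1) : 0 < ∫ Q, f Q ∂μ := by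
  rw [integral_pos_iff_support_of_nonneg hnonneg (hμ.integrable_of_continuous hf)]
  exact (hμ.measure_pos_of_isOpen (isOpen_lt continuous_const hf) hone).trans_le
    (measure_mono fun Q hQ => hQ.ne')

end IsHaarSO3

theorem trace_diagonal_mul_of_ne {i j k : Fin 3} (hij : i ≠ j) (hik : i ≠ k) (hjk : j ≠ k)
    (s : Fin 3 → ℝ) (Q : M3) :
    (diagonal s * Q).trace = s i * Q i i + s j * Q j j + s k * Q k k := by
  simp only [trace, diag_apply, diagonal_mul]
  fin_cases i <;> fin_cases j <;> fin_cases k <;> simp_all [Fin.sum_univ_three] <;> ring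

def axisHalfTurn (k : Fin 3) : M3 := diagonal fun a => if a = k then 1 else -1

theorem axisHalfTurn_mem_SO3 (k : Fin 3) : axisHalfTurn k ∈ SO3 := by
  refine ⟨?_, ?_⟩
  · rw [axisHalfTurn, diagonal_transpose, diagonal_mul_diagonal, ← diagonal_one]
    congr 1; ext a; split_ifs <;> norm_num
  · fin_cases k <;> simp [axisHalfTurn, det_diagonal, Fin.prod_univ_three]

theorem axisHalfTurn_mul_apply_self (k : Fin 3) (Q : M3) (a : Fin 3) :
    (axisHalfTurn k * Q) a a = if a = k then Q a a else -Q a a := by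
  simp only [axisHalfTurn, diagonal_mul]
  split_ifs <;> ring

/-- The half-turn about `eᵢ - eⱼ`; the sign makes the determinant `1`. -/
def swapHalfTurn (i j : Fin 3) : M3 := -(Equiv.swap i j).permMatrix ℝ

theorem swapHalfTurn_mem_SO3 {i j : Fin 3} (hij : i ≠ j) : swapHalfTurn i j ∈ SO3 := by
  refine ⟨?_, ?_⟩
  · simp [swapHalfTurn, ← permMatrix_mul]
  · norm_num [swapHalfTurn, det_neg, Equiv.Perm.sign_swap hij]

theorem swapHalfTurn_conj_apply_self (i j : Fin 3) (Q : M3) (a : Fin 3) :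
    (swapHalfTurn i j * Q * (swapHalfTurn i j)ᵀ) a a =
      Q (Equiv.swap i j a) (Equiv.swap i j a) := by
  simp [swapHalfTurn, Matrix.mul_apply, Equiv.toPEquiv_apply, PEquiv.toMatrix_apply,
    Equiv.swap_apply_eq_iff, eq_comm (a := a)]

def pairMomentIntegrand (s : Fin 3 → ℝ) (i j : Fin 3) (Q : M3) : ℝ :=
  (Q i i + Q j j) * exp (diagonal s * Q).trace

theorem continuous_pairMomentIntegrand (s : Fin 3 → ℝ) (i j : Fin 3) :
    Continuous (pairMomentIntegrand s i j) := by
  unfold pairMomentIntegrand; fun_prop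

theorem cS_pos {μ : Measure M3} (hμ : IsHaarSO3 μ) (s : Fin 3 → ℝ) : 0 < cS μ s :=
  hμ.integral_pos_of_continuous (by fun_prop) (fun _ => (exp_pos _).le) (exp_pos _)

theorem dS_add_dS {μ : Measure M3} (hμ : IsHaarSO3 μ) (s : Fin 3 → ℝ) (i j : Fin 3) :
    dS μ s i + dS μ s j = (∫ Q, pairMomentIntegrand s i j Q ∂μ) / cS μ s := by
  simp only [dS, pS, pairMomentIntegrand, ← mul_div_assoc, integral_div, add_mul]
  rw [integral_add (hμ.integrable_of_continuous (by fun_prop))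
    (hμ.integrable_of_continuous (by fun_prop)), add_div]

def symmetrizedPairIntegrand (s : Fin 3 → ℝ) (i j k : Fin 3) (Q : M3) : ℝ :=
  2 * exp (s k * Q k k) *
    ((Q i i + Q j j) * (sinh (s i * Q i i + s j * Q j j) + sinh (s i * Q j j + s j * Q i i)))

theorem pairMomentIntegrand_orbit_sum {i j k : Fin 3} (hij : i ≠ j) (hik : i ≠ k) (hjk : j ≠ k)
    (s : Fin 3 → ℝ) (Q : M3) :
    let F := pairMomentIntegrand s i j
    let U := axisHalfTurn k
    let P := swapHalfTurn i j
    F Q + F (U * Q) + (F (P * Q * Pᵀ) + F (U * (P * Q * Pᵀ))) =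
      symmetrizedPairIntegrand s i j k Q := by
  simp only [pairMomentIntegrand, symmetrizedPairIntegrand, trace_diagonal_mul_of_ne hij hik hjk,
    axisHalfTurn_mul_apply_self, swapHalfTurn_conj_apply_self, if_neg hik, if_neg hjk,
    ↓reduceIte, Equiv.swap_apply_left, Equiv.swap_apply_right,
    Equiv.swap_apply_of_ne_of_ne hik.symm hjk.symm, sinh_eq, mul_neg, exp_add, exp_neg]
  ring

theorem integral_symmetrizedPairIntegrand {μ : Measure M3} (hμ : IsHaarSO3 μ) {i j k : Fin 3}
    (hij : i ≠ j) (hik : i ≠ k) (hjk : j ≠ k) (s : Fin 3 → ℝ) :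
    ∫ Q, symmetrizedPairIntegrand s i j k Q ∂μ = 4 * ∫ Q, pairMomentIntegrand s i j Q ∂μ := by
  have hF := continuous_pairMomentIntegrand s i j
  simp only [← pairMomentIntegrand_orbit_sum hij hik hjk]
  rw [hμ.integral_add_comp_conj (swapHalfTurn_mem_SO3 hij) (f := fun Q => _ + _) (by fun_prop),
    hμ.integral_add_comp_mul_left (axisHalfTurn_mem_SO3 k) hF]
  ring

theorem mul_sinh_add_sinh_nonneg {a c x y : ℝ} (hc : 0 ≤ c) (hxy : x + y = c * a) :
    0 ≤ a * (sinh x + sinh y) := by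
  rcases le_total 0 a with ha | ha
  · have : sinh (-y) ≤ sinh x := sinh_le_sinh.2 (by nlinarith)
    rw [sinh_neg] at this
    exact mul_nonneg ha (by linarith)
  · have : sinh x ≤ sinh (-y) := sinh_le_sinh.2 (by nlinarith)
    rw [sinh_neg] at this
    exact mul_nonneg_of_nonpos_of_nonpos ha (by linarith)

theorem symmetrizedPairIntegrand_nonneg {s : Fin 3 → ℝ} {i j : Fin 3} (hs : 0 ≤ s i + s j)
    (k : Fin 3) (Q : M3) : 0 ≤ symmetrizedPairIntegrand s i j k Q :=
  mul_nonneg (by positivity) (mul_sinh_add_sinh_nonneg hs (by ring))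

theorem symmetrizedPairIntegrand_eq_zero {s : Fin 3 → ℝ} {i j : Fin 3} (hs : s i + s j = 0)
    (k : Fin 3) (Q : M3) : symmetrizedPairIntegrand s i j k Q = 0 := by
  have hy : s i * Q j j + s j * Q i i = -(s i * Q i i + s j * Q j j) := by
    rw [eq_neg_of_add_eq_zero_right hs]; ring
  rw [symmetrizedPairIntegrand, hy, sinh_neg, add_neg_cancel, mul_zero, mul_zero]

theorem symmetrizedPairIntegrand_one_pos {s : Fin 3 → ℝ} {i j : Fin 3} (hs : 0 < s i + s j)
    (k : Fin 3) : 0 < symmetrizedPairIntegrand s i j k 1 := by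
  simp only [symmetrizedPairIntegrand, one_apply_eq, mul_one]
  have := sinh_pos_iff.2 hs
  positivity

theorem continuous_symmetrizedPairIntegrand (s : Fin 3 → ℝ) (i j k : Fin 3) :
    Continuous (symmetrizedPairIntegrand s i j k) := by
  unfold symmetrizedPairIntegrand; fun_prop

theorem add_nonneg_of_le_of_abs_le {s : Fin 3 → ℝ} (h1 : s 1 ≤ s 0) (h2 : |s 2| ≤ s 1)
    {i j : Fin 3} (hij : i ≠ j) : 0 ≤ s i + s j := by
  have := abs_le.1 h2
  fin_cases i <;> fin_cases j <;> simp at hij ⊢ <;> linarith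

/-- For `S = diag (s₁,s₂,s₃)` with `s₁ ≥ s₂ ≥ |s₃| ≥ 0` and distinct indices `i ≠ j`:
`dᵢ(S) + dⱼ(S) ≥ 0`, and `sᵢ + sⱼ = 0` iff `dᵢ(S) + dⱼ(S) = 0`. -/
theorem d_sum_nonneg_and_vanishing_iff (μ : Measure M3) (hμ : IsHaarSO3 μ)
    (s : Fin 3 → ℝ) (h1 : s 1 ≤ s 0) (h2 : |s 2| ≤ s 1)
    (i j : Fin 3) (hij : i ≠ j) :
    0 ≤ dS μ s i + dS μ s j ∧ (s i + s j = 0 ↔ dS μ s i + dS μ s j = 0) := by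
  obtain ⟨k, hik, hjk⟩ : ∃ k, i ≠ k ∧ j ≠ k := by fin_cases i <;> fin_cases j <;> decide
  have hs := add_nonneg_of_le_of_abs_le h1 h2 hij
  have hc := cS_pos hμ s
  have hd : dS μ s i + dS μ s j =
      (∫ Q, symmetrizedPairIntegrand s i j k Q ∂μ) / (4 * cS μ s) := by
    rw [dS_add_dS hμ, integral_symmetrizedPairIntegrand hμ hij hik hjk]
    field_simp
  rw [hd, div_eq_zero_iff, or_iff_left (by positivity)]
  refine ⟨div_nonneg (integral_nonneg (symmetrizedPairIntegrand_nonneg hs k)) (by positivity),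
    fun hzero => ?_, fun hzero => ?_⟩
  · simp [symmetrizedPairIntegrand_eq_zero hzero]
  · by_contra hne
    exact (hμ.integral_pos_of_continuous (continuous_symmetrizedPairIntegrand s i j k)
      (symmetrizedPairIntegrand_nonneg hs k) (symmetrizedPairIntegrand_one_pos
        (hs.lt_of_ne' hne) k)).ne' hzero
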